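/- arXiv:2511.19942 — 6 statements merged into one kernel-verified Lean document; each statement's English description precedes it below -/
import Mathlib

section
/- Let π_base be a full-support probability distribution on a finite set T, r : T → ℝ a reward, γ ≥ 0 an entropy coefficient, and β > 0. Then the distribution π*(τ) = [π_base(τ)]^{1−γ/β}·exp(r(τ)/β) / Z, with Z = Σ_{τ'} [π_base(τ')]^{1−γ/β}·exp(r(τ')/β), is the unique maximizer over probability distributions π on T of E_{τ∼π}[r(τ) − γ·log π_base(τ)] − β·KL(π‖π_base). -/
/-!
Writing the objective `r - γ log pb` as `β (log ps - log pb) + β log Z`, the objective of `p`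
equals `β log Z - β KL(p‖ps)`, so the claim is Gibbs' inequality `KL(p‖ps) ≥ 0`, with equality
only at `p = ps`.
-/

open Real Finset InformationTheory

section Gibbs

variable {T : Type*} [Fintype T] {p q : T → ℝ}

lemma mul_log_div_eq_mul_klFun {a b : ℝ} (hb : 0 < b) :
    a * log (a / b) = b * klFun (a / b) + (a - b) := by
  rw [klFun_apply]
  field_simp
  ring

lemma sum_mul_log_div_eq_sum_mul_klFun (hq : ∀ τ, 0 < q τ) (hpq : ∑ τ, p τ = ∑ τ, q τ) :
    ∑ τ, p τ * log (p τ / q τ) = ∑ τ, q τ * klFun (p τ / q τ) := by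
  simp only [mul_log_div_eq_mul_klFun (hq _), sum_add_distrib, sum_sub_distrib, hpq, sub_self,
    add_zero]

lemma sum_mul_log_div_nonneg (hp : ∀ τ, 0 ≤ p τ) (hq : ∀ τ, 0 < q τ)
    (hpq : ∑ τ, p τ = ∑ τ, q τ) : 0 ≤ ∑ τ, p τ * log (p τ / q τ) := by
  rw [sum_mul_log_div_eq_sum_mul_klFun hq hpq]
  exact sum_nonneg fun τ _ ↦ mul_nonneg (hq τ).le (klFun_nonneg (div_nonneg (hp τ) (hq τ).le))

lemma eq_of_sum_mul_log_div_eq_zero (hp : ∀ τ, 0 ≤ p τ) (hq : ∀ τ, 0 < q τ)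
    (hpq : ∑ τ, p τ = ∑ τ, q τ) (h : ∑ τ, p τ * log (p τ / q τ) = 0) : p = q := by
  have hnonneg (τ : T) : 0 ≤ q τ * klFun (p τ / q τ) :=
    mul_nonneg (hq τ).le (klFun_nonneg (div_nonneg (hp τ) (hq τ).le))
  rw [sum_mul_log_div_eq_sum_mul_klFun hq hpq,
    sum_eq_zero_iff_of_nonneg fun τ _ ↦ hnonneg τ] at h
  funext τ
  have hkl := (mul_eq_zero.mp (h τ (mem_univ τ))).resolve_left (hq τ).ne'
  rw [klFun_eq_zero_iff (div_nonneg (hp τ) (hq τ).le), div_eq_one_iff_eq (hq τ).ne'] at hkl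
  exact hkl

end Gibbs

section Variational

variable {T : Type*} [Fintype T]

noncomputable def regularizedObjective (g pb : T → ℝ) (β : ℝ) (p : T → ℝ) : ℝ :=
  ∑ τ, p τ * g τ - β * ∑ τ, p τ * log (p τ / pb τ)

variable {g pb ps p : T → ℝ} {β c : ℝ}

lemma regularizedObjective_eq_sub_kl (hpb : ∀ τ, 0 < pb τ) (hps : ∀ τ, 0 < ps τ)
    (hg : ∀ τ, g τ = β * (log (ps τ) - log (pb τ)) + c) (hp1 : ∑ τ, p τ = 1) :
    regularizedObjective g pb β p = c - β * ∑ τ, p τ * log (p τ / ps τ) := by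
  have hterm (τ : T) : p τ * g τ - β * (p τ * log (p τ / pb τ)) =
      c * p τ - β * (p τ * log (p τ / ps τ)) := by
    rcases eq_or_ne (p τ) 0 with h0 | h0
    · simp [h0]
    · rw [hg, log_div h0 (hpb τ).ne', log_div h0 (hps τ).ne']
      ring
  rw [regularizedObjective, mul_sum, ← sum_sub_distrib, sum_congr rfl fun τ _ ↦ hterm τ,
    sum_sub_distrib, ← mul_sum, ← mul_sum, hp1, mul_one]

theorem regularizedObjective_le_and_eq_iff (hpb : ∀ τ, 0 < pb τ) (hps : ∀ τ, 0 < ps τ)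
    (hps1 : ∑ τ, ps τ = 1) (hβ : 0 < β)
    (hg : ∀ τ, g τ = β * (log (ps τ) - log (pb τ)) + c) :
    (∀ p : T → ℝ, (∀ τ, 0 ≤ p τ) → ∑ τ, p τ = 1 →
      regularizedObjective g pb β p ≤ regularizedObjective g pb β ps) ∧
    (∀ p : T → ℝ, (∀ τ, 0 ≤ p τ) → ∑ τ, p τ = 1 →
      regularizedObjective g pb β p = regularizedObjective g pb β ps → p = ps) := by
  have hmax : regularizedObjective g pb β ps = c := by
    simp [regularizedObjective_eq_sub_kl hpb hps hg hps1, div_self (hps _).ne']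
  refine ⟨fun p hp hp1 ↦ ?_, fun p hp hp1 heq ↦ ?_⟩
  · rw [hmax, regularizedObjective_eq_sub_kl hpb hps hg hp1, sub_le_self_iff]
    exact mul_nonneg hβ.le (sum_mul_log_div_nonneg hp hps (hp1.trans hps1.symm))
  · rw [hmax, regularizedObjective_eq_sub_kl hpb hps hg hp1, sub_eq_self,
      mul_eq_zero, or_iff_right hβ.ne'] at heq
    exact eq_of_sum_mul_log_div_eq_zero hp hps (hp1.trans hps1.symm) heq

end Variational

theorem stmt3_general {T : Type*} [Fintype T] (pb : T → ℝ) (hpos : ∀ τ, 0 < pb τ)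
    (r : T → ℝ) (γ β : ℝ) (hβ : 0 < β)
    (Z : ℝ) (hZ : Z = ∑ τ', pb τ' ^ (1 - γ / β) * Real.exp (r τ' / β))
    (ps : T → ℝ) (hps : ∀ τ, ps τ = pb τ ^ (1 - γ / β) * Real.exp (r τ / β) / Z) :
    (∀ p : T → ℝ, (∀ τ, 0 ≤ p τ) → (∑ τ, p τ) = 1 →
      (∑ τ, p τ * (r τ - γ * Real.log (pb τ))) -
        β * (∑ τ, p τ * Real.log (p τ / pb τ)) ≤
      (∑ τ, ps τ * (r τ - γ * Real.log (pb τ))) -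
        β * (∑ τ, ps τ * Real.log (ps τ / pb τ))) ∧
    (∀ p : T → ℝ, (∀ τ, 0 ≤ p τ) → (∑ τ, p τ) = 1 →
      (∑ τ, p τ * (r τ - γ * Real.log (pb τ))) -
        β * (∑ τ, p τ * Real.log (p τ / pb τ)) =
      (∑ τ, ps τ * (r τ - γ * Real.log (pb τ))) -
        β * (∑ τ, ps τ * Real.log (ps τ / pb τ)) → p = ps) := by
  rcases isEmpty_or_nonempty T with hT | hT
  · exact ⟨fun p _ hp1 ↦ by simp at hp1, fun p _ hp1 ↦ by simp at hp1⟩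
  have hweight (τ : T) : 0 < pb τ ^ (1 - γ / β) * exp (r τ / β) :=
    mul_pos (rpow_pos_of_pos (hpos τ) _) (exp_pos _)
  have hZpos : 0 < Z := hZ ▸ sum_pos (fun τ _ ↦ hweight τ) univ_nonempty
  have hps_pos (τ : T) : 0 < ps τ := hps τ ▸ div_pos (hweight τ) hZpos
  have hps_sum : ∑ τ, ps τ = 1 := by
    simp only [hps, ← sum_div, ← hZ, div_self hZpos.ne']
  have hscore (τ : T) : r τ - γ * log (pb τ) =
      β * (log (ps τ) - log (pb τ)) + β * log Z := by
    rw [hps, log_div (hweight τ).ne' hZpos.ne', log_mul (rpow_pos_of_pos (hpos τ) _).ne'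
      (exp_pos _).ne', log_rpow (hpos τ), log_exp]
    field_simp
    ring
  exact regularizedObjective_le_and_eq_iff hpos hps_pos hps_sum hβ hscore

/-- The tilted distribution `pb(τ)^(1−γ/β)·exp(r(τ)/β)/Z` is the unique maximizer of
`E_{τ∼p}[r(τ) − γ·log pb(τ)] − β·KL(p‖pb)`. -/
theorem stmt3 {T : Type*} [Fintype T] (pb : T → ℝ) (hpos : ∀ τ, 0 < pb τ)
    (hsum : ∑ τ, pb τ = 1) (r : T → ℝ) (γ β : ℝ) (hγ : 0 ≤ γ) (hβ : 0 < β)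
    (Z : ℝ) (hZ : Z = ∑ τ', pb τ' ^ (1 - γ / β) * Real.exp (r τ' / β))
    (ps : T → ℝ) (hps : ∀ τ, ps τ = pb τ ^ (1 - γ / β) * Real.exp (r τ / β) / Z) :
    (∀ p : T → ℝ, (∀ τ, 0 ≤ p τ) → (∑ τ, p τ) = 1 →
      (∑ τ, p τ * (r τ - γ * Real.log (pb τ))) -
        β * (∑ τ, p τ * Real.log (p τ / pb τ)) ≤
      (∑ τ, ps τ * (r τ - γ * Real.log (pb τ))) -
        β * (∑ τ, ps τ * Real.log (ps τ / pb τ))) ∧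
    (∀ p : T → ℝ, (∀ τ, 0 ≤ p τ) → (∑ τ, p τ) = 1 →
      (∑ τ, p τ * (r τ - γ * Real.log (pb τ))) -
        β * (∑ τ, p τ * Real.log (p τ / pb τ)) =
      (∑ τ, ps τ * (r τ - γ * Real.log (pb τ))) -
        β * (∑ τ, ps τ * Real.log (ps τ / pb τ)) → p = ps) :=
  stmt3_general pb hpos r γ β hβ Z hZ ps hps
end

section
/- Let T be a finite set, π_base a full-support distribution on T, C ⊆ T with both C and T\C nonempty, binary reward r(τ) = 1 if τ ∈ C else 0, γ̃ ≥ 0, and β > 0. Let π_ent(τ) ∝ π_base(τ)^{1−γ̃}·exp(r(τ)/β) (entropy-modified policy) and π_DS(τ) ∝ π_base(τ)^{1−γ̃·1[τ∈C]}·exp(r(τ)/β) (differential policy). If β is chosen for each policy so that both achieve the same correctness C* = Σ_{τ∈C} π(τ) ∈ (0,1), then KL(π_base‖π_DS) ≤ KL(π_base‖π_ent). -/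
/-!
Both policies have the form `π τ ∝ q τ · exp (1[τ ∈ C] / β)`, so the inverse temperature only
rescales `π` on `C` against `Cᶜ`. Once the correctness `C*` is fixed, `π` restricted to `C` is
`C* · q / q(C)` and restricted to `Cᶜ` it is `(1 - C*) · q / q(Cᶜ)`, whatever `β` is. The two
policies use the same `q = π_base ^ (1 - γ̃)` on `C`, so they coincide there. On `Cᶜ` the
differential policy is proportional to `π_base` itself, which is exactly the equality case of the
log-sum inequality, while the entropy-modified one can only do worse.
-/

open Finset Real

namespace Real

variable {ι : Type*} {s : Finset ι} {p q : ι → ℝ}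

lemma mul_log_add_sub_mul_le_mul_log_div {a b t : ℝ} (ha : 0 < a) (hb : 0 < b) (ht : 0 < t) :
    a * log t + a - t * b ≤ a * log (a / b) := by
  have key := log_le_sub_one_of_pos (show 0 < t * b / a by positivity)
  have hsplit : log (a / b) = log t - log (t * b / a) := by
    rw [log_div ha.ne' hb.ne', log_div (by positivity) ha.ne', log_mul ht.ne' hb.ne']
    ring
  have hmul : a * (t * b / a - 1) = t * b - a := by field_simp
  rw [hsplit, mul_sub]
  linarith [mul_le_mul_of_nonneg_left key ha.le]

/-- The log-sum inequality. -/
lemma sum_mul_log_div_sum_le_sum_mul_log_div (hp : ∀ i ∈ s, 0 < p i) (hq : ∀ i ∈ s, 0 < q i) :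
    (∑ i ∈ s, p i) * log ((∑ i ∈ s, p i) / ∑ i ∈ s, q i) ≤ ∑ i ∈ s, p i * log (p i / q i) := by
  rcases s.eq_empty_or_nonempty with rfl | hs
  · simp
  set P := ∑ i ∈ s, p i
  set Q := ∑ i ∈ s, q i
  have hP : 0 < P := sum_pos hp hs
  have hQ : 0 < Q := sum_pos hq hs
  calc P * log (P / Q) = ∑ i ∈ s, (p i * log (P / Q) + p i - P / Q * q i) := by
        rw [sum_sub_distrib, sum_add_distrib, ← sum_mul, ← mul_sum, div_mul_cancel₀ _ hQ.ne']
        ring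
    _ ≤ ∑ i ∈ s, p i * log (p i / q i) :=
        sum_le_sum fun i hi => mul_log_add_sub_mul_le_mul_log_div (hp i hi) (hq i hi) (div_pos hP hQ)

lemma sum_mul_log_div_eq_of_eq_const_mul {k : ℝ} (hp : ∀ i ∈ s, 0 < p i)
    (hq : ∀ i ∈ s, q i = k * p i) :
    ∑ i ∈ s, p i * log (p i / q i) = (∑ i ∈ s, p i) * log ((∑ i ∈ s, p i) / ∑ i ∈ s, q i) := by
  have hterm : ∀ i ∈ s, p i * log (p i / q i) = p i * log k⁻¹ := fun i hi => by
    rw [hq i hi, div_mul_cancel_right₀ (hp i hi).ne']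
  rw [sum_congr rfl hterm, ← sum_mul, sum_congr rfl hq, ← mul_sum]
  rcases eq_or_ne (∑ i ∈ s, p i) 0 with h | h
  · simp [h]
  · rw [div_mul_cancel_right₀ h]

end Real

lemma Finset.eqOn_of_eq_const_mul_of_sum_eq {ι : Type*} {s : Finset ι} {f g q : ι → ℝ} {a b : ℝ}
    (hq : ∀ i ∈ s, 0 < q i) (hf : ∀ i ∈ s, f i = a * q i) (hg : ∀ i ∈ s, g i = b * q i)
    (hfg : ∑ i ∈ s, f i = ∑ i ∈ s, g i) : Set.EqOn f g s := by
  intro i hi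
  have hQ : 0 < ∑ i ∈ s, q i := sum_pos hq ⟨i, hi⟩
  rw [sum_congr rfl hf, sum_congr rfl hg, ← mul_sum, ← mul_sum] at hfg
  rw [hf i hi, hg i hi, mul_right_cancel₀ hQ.ne' hfg]

lemma Finset.sum_div_sum_self {ι : Type*} [Fintype ι] [Nonempty ι] {w : ι → ℝ}
    (hw : ∀ i, 0 < w i) : ∑ i, w i / ∑ j, w j = 1 := by
  rw [← sum_div, div_self (sum_pos (fun i _ => hw i) univ_nonempty).ne']

theorem stmt8_general {T : Type*} [Fintype T] [DecidableEq T] (pb : T → ℝ)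
    (hpos : ∀ τ, 0 < pb τ)
    (C : Finset T) (hC : C.Nonempty)
    (r : T → ℝ) (hr : ∀ τ, r τ = if τ ∈ C then 1 else 0)
    (γ : ℝ) (βe βd : ℝ)
    (pe pd : T → ℝ)
    (hpe : ∀ τ, pe τ = pb τ ^ (1 - γ) * Real.exp (r τ / βe) /
        (∑ τ', pb τ' ^ (1 - γ) * Real.exp (r τ' / βe)))
    (hpd : ∀ τ, pd τ =
        pb τ ^ (1 - γ * (if τ ∈ C then (1 : ℝ) else 0)) * Real.exp (r τ / βd) /
        (∑ τ', pb τ' ^ (1 - γ * (if τ' ∈ C then (1 : ℝ) else 0)) *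
          Real.exp (r τ' / βd)))
    (Cstar : ℝ)
    (hce : ∑ τ ∈ C, pe τ = Cstar) (hcd : ∑ τ ∈ C, pd τ = Cstar) :
    ∑ τ, pb τ * Real.log (pb τ / pd τ) ≤ ∑ τ, pb τ * Real.log (pb τ / pe τ) := by
  have : Nonempty T := ⟨hC.choose⟩
  have hwe : ∀ τ, 0 < pb τ ^ (1 - γ) * exp (r τ / βe) := fun τ =>
    mul_pos (rpow_pos_of_pos (hpos τ) _) (exp_pos _)
  have hwd : ∀ τ, 0 < pb τ ^ (1 - γ * (if τ ∈ C then (1 : ℝ) else 0)) * exp (r τ / βd) :=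
    fun τ => mul_pos (rpow_pos_of_pos (hpos τ) _) (exp_pos _)
  have hpe_pos : ∀ τ, 0 < pe τ := fun τ => by
    rw [hpe]; exact div_pos (hwe τ) (sum_pos (fun τ _ => hwe τ) univ_nonempty)
  have hd1 : ∑ τ, pd τ = 1 := by simp_rw [hpd]; exact sum_div_sum_self hwd
  have he1 : ∑ τ, pe τ = 1 := by simp_rw [hpe]; exact sum_div_sum_self hwe
  set Ze := ∑ τ', pb τ' ^ (1 - γ) * exp (r τ' / βe)
  set Zd := ∑ τ', pb τ' ^ (1 - γ * (if τ' ∈ C then (1 : ℝ) else 0)) * exp (r τ' / βd)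
  have hagree : Set.EqOn pd pe C :=
    eqOn_of_eq_const_mul_of_sum_eq (q := fun τ => pb τ ^ (1 - γ)) (a := exp (1 / βd) / Zd)
      (b := exp (1 / βe) / Ze) (fun τ _ => rpow_pos_of_pos (hpos τ) _)
      (fun τ hτ => by rw [hpd, hr, if_pos hτ, mul_one]; ring)
      (fun τ hτ => by rw [hpe, hr, if_pos hτ]; ring) (hcd.trans hce.symm)
  have hcompl_sum : ∑ τ ∈ Cᶜ, pd τ = ∑ τ ∈ Cᶜ, pe τ := by
    linarith [sum_compl_add_sum C pd, sum_compl_add_sum C pe]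
  have hcompl_pd : ∀ τ ∈ Cᶜ, pd τ = Zd⁻¹ * pb τ := fun τ hτ => by
    rw [hpd, hr, if_neg (mem_compl.mp hτ), mul_zero, sub_zero, rpow_one, zero_div, exp_zero]
    ring
  calc ∑ τ, pb τ * log (pb τ / pd τ)
      = ∑ τ ∈ C, pb τ * log (pb τ / pe τ) +
          (∑ τ ∈ Cᶜ, pb τ) * log ((∑ τ ∈ Cᶜ, pb τ) / ∑ τ ∈ Cᶜ, pe τ) := by
        rw [← sum_add_sum_compl C, sum_congr rfl fun τ hτ => by rw [hagree hτ],
          sum_mul_log_div_eq_of_eq_const_mul (fun τ _ => hpos τ) hcompl_pd, hcompl_sum]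
    _ ≤ ∑ τ ∈ C, pb τ * log (pb τ / pe τ) + ∑ τ ∈ Cᶜ, pb τ * log (pb τ / pe τ) := by
        gcongr
        exact sum_mul_log_div_sum_le_sum_mul_log_div (fun τ _ => hpos τ) fun τ _ => hpe_pos τ
    _ = ∑ τ, pb τ * log (pb τ / pe τ) := sum_add_sum_compl C _

/-- At matched correctness, reverse KL: KL(pb‖π_DS) ≤ KL(pb‖π_ent). -/
theorem stmt8 {T : Type*} [Fintype T] [DecidableEq T] (pb : T → ℝ)
    (hpos : ∀ τ, 0 < pb τ) (hsum : ∑ τ, pb τ = 1)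
    (C : Finset T) (hC : C.Nonempty) (hCc : Cᶜ.Nonempty)
    (r : T → ℝ) (hr : ∀ τ, r τ = if τ ∈ C then 1 else 0)
    (γ : ℝ) (hγ : 0 ≤ γ) (βe βd : ℝ) (hβe : 0 < βe) (hβd : 0 < βd)
    (pe pd : T → ℝ)
    (hpe : ∀ τ, pe τ = pb τ ^ (1 - γ) * Real.exp (r τ / βe) /
        (∑ τ', pb τ' ^ (1 - γ) * Real.exp (r τ' / βe)))
    (hpd : ∀ τ, pd τ =
        pb τ ^ (1 - γ * (if τ ∈ C then (1 : ℝ) else 0)) * Real.exp (r τ / βd) /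
        (∑ τ', pb τ' ^ (1 - γ * (if τ' ∈ C then (1 : ℝ) else 0)) *
          Real.exp (r τ' / βd)))
    (Cstar : ℝ) (h0 : 0 < Cstar) (h1 : Cstar < 1)
    (hce : ∑ τ ∈ C, pe τ = Cstar) (hcd : ∑ τ ∈ C, pd τ = Cstar) :
    ∑ τ, pb τ * Real.log (pb τ / pd τ) ≤ ∑ τ, pb τ * Real.log (pb τ / pe τ) :=
  stmt8_general pb hpos C hC r hr γ βe βd pe pd hpe hpd Cstar hce hcd
end

section
/- Under the same setting (finite T, full-support π_base, C and its complement nonempty, binary reward r = 1_C, shared exponent γ̃ ≥ 0, and inverse temperatures chosen so that π_ent and π_DS achieve the same correctness C* ∈ (0,1)), the forward KL divergence satisfies KL(π_DS‖π_base) ≤ KL(π_ent‖π_base). -/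
/-!
On `C` both tilted policies are proportional to `π_base ^ (1 - γ)`, so matching their mass on `C`
makes them coincide there. Off `C`, `π_DS` is proportional to `π_base` itself, and by the log-sum
inequality the proportional distribution minimises `∑ q log (q / π_base)` among all `q` of the
given mass `1 - C*` on `Cᶜ`; in particular it beats `π_ent`.
-/

open Real Finset

section Normalization

variable {ι K : Type*} [Field K] {s : Finset ι}

theorem sum_eq_one_of_forall_eq_div_sum {p w : ι → K} (h : ∀ i ∈ s, p i = w i / ∑ j ∈ s, w j)
    (hw : ∑ i ∈ s, w i ≠ 0) : ∑ i ∈ s, p i = 1 := by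
  rw [sum_congr rfl h, ← sum_div, div_self hw]

theorem eq_sum_div_sum_mul_of_forall_eq_mul {q w : ι → K} {k : K} (h : ∀ i ∈ s, q i = w i * k)
    (hw : ∑ i ∈ s, w i ≠ 0) {i : ι} (hi : i ∈ s) :
    q i = (∑ j ∈ s, q j) / (∑ j ∈ s, w j) * w i := by
  rw [sum_congr rfl h, ← sum_mul, h i hi]
  field_simp

theorem eq_of_forall_eq_mul_of_sum_eq [LinearOrder K] [IsStrictOrderedRing K] {q q' w : ι → K}
    {k k' : K} (hw : ∀ i ∈ s, 0 < w i) (hq : ∀ i ∈ s, q i = w i * k) (hq' : ∀ i ∈ s, q' i = w i * k')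
    (hmass : ∑ i ∈ s, q i = ∑ i ∈ s, q' i) {i : ι} (hi : i ∈ s) : q i = q' i := by
  have hW : ∑ j ∈ s, w j ≠ 0 := (sum_pos hw ⟨i, hi⟩).ne'
  rw [eq_sum_div_sum_mul_of_forall_eq_mul hq hW hi, eq_sum_div_sum_mul_of_forall_eq_mul hq' hW hi,
    hmass]

end Normalization

section LogSum

variable {ι : Type*} {s : Finset ι} {p q : ι → ℝ}

theorem sum_mul_log_div_of_forall_eq_mul {k : ℝ} (hp : ∀ i ∈ s, p i ≠ 0)
    (h : ∀ i ∈ s, q i = k * p i) :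
    ∑ i ∈ s, q i * log (q i / p i) = (∑ i ∈ s, q i) * log k := by
  rw [sum_mul]
  refine sum_congr rfl fun i hi => ?_
  rw [h i hi, mul_div_cancel_right₀ _ (hp i hi)]

theorem mul_log_sum_div_sum_le_sum_mul_log_div (hp : ∀ i ∈ s, 0 < p i) (hq : ∀ i ∈ s, 0 ≤ q i) :
    (∑ i ∈ s, q i) * log ((∑ i ∈ s, q i) / ∑ i ∈ s, p i) ≤ ∑ i ∈ s, q i * log (q i / p i) := by
  rcases (sum_nonneg hq).eq_or_lt with hQ | hQ
  · rw [← hQ, zero_mul]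
    refine (sum_eq_zero fun i hi => ?_).ge
    rw [(sum_eq_zero_iff_of_nonneg hq).mp hQ.symm i hi, zero_mul]
  have hs : s.Nonempty := nonempty_of_sum_ne_zero hQ.ne'
  have hP : 0 < ∑ i ∈ s, p i := sum_pos hp hs
  set c := (∑ i ∈ s, q i) / ∑ i ∈ s, p i
  have hc : 0 < c := div_pos hQ hP
  -- `log x ≥ 1 - 1 / x` at `x = q / (c p)`, summed: the correction terms `q - c p` add up to `0`.
  have hterm : ∀ i ∈ s, q i * log c + (q i - c * p i) ≤ q i * log (q i / p i) := by
    intro i hi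
    rcases (hq i hi).eq_or_lt with hqi | hqi
    · rw [← hqi]
      nlinarith [hp i hi]
    have hpi := hp i hi
    have hlog := one_sub_inv_le_log_of_pos (div_pos hqi (mul_pos hc hpi))
    rw [log_div hqi.ne' (mul_pos hc hpi).ne', log_mul hc.ne' hpi.ne', inv_div] at hlog
    rw [log_div hqi.ne' hpi.ne']
    have : q i * (1 - c * p i / q i) = q i - c * p i := by field_simp
    nlinarith
  have hcP : c * ∑ i ∈ s, p i = ∑ i ∈ s, q i := div_mul_cancel₀ _ hP.ne'
  calc (∑ i ∈ s, q i) * log c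
      = ∑ i ∈ s, (q i * log c + (q i - c * p i)) := by
        rw [sum_add_distrib, sum_sub_distrib, ← mul_sum, hcP, sum_mul]; ring
    _ ≤ ∑ i ∈ s, q i * log (q i / p i) := sum_le_sum hterm

theorem sum_mul_log_div_le_of_forall_eq_mul {q' : ι → ℝ} {k : ℝ} (hp : ∀ i ∈ s, 0 < p i)
    (hq' : ∀ i ∈ s, 0 ≤ q' i) (hq : ∀ i ∈ s, q i = p i * k) (hmass : ∑ i ∈ s, q i = ∑ i ∈ s, q' i) :
    ∑ i ∈ s, q i * log (q i / p i) ≤ ∑ i ∈ s, q' i * log (q' i / p i) := by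
  rcases s.eq_empty_or_nonempty with rfl | hs
  · simp
  have hP : ∑ i ∈ s, p i ≠ 0 := (sum_pos hp hs).ne'
  calc ∑ i ∈ s, q i * log (q i / p i)
      = (∑ i ∈ s, q i) * log ((∑ i ∈ s, q i) / ∑ i ∈ s, p i) :=
        sum_mul_log_div_of_forall_eq_mul (fun i hi => (hp i hi).ne')
          fun i hi => eq_sum_div_sum_mul_of_forall_eq_mul hq hP hi
    _ = (∑ i ∈ s, q' i) * log ((∑ i ∈ s, q' i) / ∑ i ∈ s, p i) := by rw [hmass]
    _ ≤ ∑ i ∈ s, q' i * log (q' i / p i) := mul_log_sum_div_sum_le_sum_mul_log_div hp hq'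

end LogSum

theorem stmt9_general {T : Type*} [Fintype T] [DecidableEq T] (pb : T → ℝ)
    (hpos : ∀ τ, 0 < pb τ)
    (C : Finset T) (hC : C.Nonempty)
    (r : T → ℝ) (hr : ∀ τ, r τ = if τ ∈ C then 1 else 0)
    (γ : ℝ) (βe βd : ℝ)
    (pe pd : T → ℝ)
    (hpe : ∀ τ, pe τ = pb τ ^ (1 - γ) * Real.exp (r τ / βe) /
        (∑ τ', pb τ' ^ (1 - γ) * Real.exp (r τ' / βe)))
    (hpd : ∀ τ, pd τ =
        pb τ ^ (1 - γ * (if τ ∈ C then (1 : ℝ) else 0)) * Real.exp (r τ / βd) /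
        (∑ τ', pb τ' ^ (1 - γ * (if τ' ∈ C then (1 : ℝ) else 0)) *
          Real.exp (r τ' / βd)))
    (Cstar : ℝ)
    (hce : ∑ τ ∈ C, pe τ = Cstar) (hcd : ∑ τ ∈ C, pd τ = Cstar) :
    ∑ τ, pd τ * Real.log (pd τ / pb τ) ≤ ∑ τ, pe τ * Real.log (pe τ / pb τ) := by
  set Ze := ∑ τ', pb τ' ^ (1 - γ) * exp (r τ' / βe)
  set Zd := ∑ τ', pb τ' ^ (1 - γ * (if τ' ∈ C then (1 : ℝ) else 0)) * exp (r τ' / βd)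
  have hT : (univ : Finset T).Nonempty := hC.mono (subset_univ C)
  have hZe : 0 < Ze := sum_pos (fun τ _ => by have := hpos τ; positivity) hT
  have hZd : 0 < Zd := sum_pos (fun τ _ => by have := hpos τ; positivity) hT
  have heC : ∀ τ ∈ C, pe τ = pb τ ^ (1 - γ) * (exp (1 / βe) / Ze) := fun τ hτ => by
    rw [hpe τ, hr τ, if_pos hτ, mul_div_assoc]
  have hdC : ∀ τ ∈ C, pd τ = pb τ ^ (1 - γ) * (exp (1 / βd) / Zd) := fun τ hτ => by
    rw [hpd τ, hr τ, if_pos hτ, mul_one, mul_div_assoc]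
  have hdCc : ∀ τ ∈ Cᶜ, pd τ = pb τ * (1 / Zd) := fun τ hτ => by
    rw [hpd τ, hr τ, if_neg (mem_compl.mp hτ)]
    simp only [mul_zero, sub_zero, rpow_one, zero_div, exp_zero, mul_one, mul_one_div]
  have hagree : ∀ τ ∈ C, pd τ = pe τ :=
    fun τ hτ => eq_of_forall_eq_mul_of_sum_eq (fun τ _ => rpow_pos_of_pos (hpos τ) _) hdC heC
      (hcd.trans hce.symm) hτ
  have hmass : ∑ τ ∈ Cᶜ, pd τ = ∑ τ ∈ Cᶜ, pe τ := by
    have he := sum_eq_one_of_forall_eq_div_sum (fun τ _ => hpe τ) hZe.ne'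
    have hd := sum_eq_one_of_forall_eq_div_sum (fun τ _ => hpd τ) hZd.ne'
    rw [← sum_add_sum_compl C] at he hd
    linarith
  rw [← sum_add_sum_compl C, ← sum_add_sum_compl C fun τ => pe τ * log (pe τ / pb τ),
    sum_congr rfl fun τ hτ => by rw [hagree τ hτ]]
  exact add_le_add le_rfl <| sum_mul_log_div_le_of_forall_eq_mul (fun τ _ => hpos τ)
    (fun τ _ => by rw [hpe τ]; have := hpos τ; positivity) hdCc hmass

/-- At matched correctness, forward KL: KL(π_DS‖pb) ≤ KL(π_ent‖pb). -/
theorem stmt9 {T : Type*} [Fintype T] [DecidableEq T] (pb : T → ℝ)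
    (hpos : ∀ τ, 0 < pb τ) (hsum : ∑ τ, pb τ = 1)
    (C : Finset T) (hC : C.Nonempty) (hCc : Cᶜ.Nonempty)
    (r : T → ℝ) (hr : ∀ τ, r τ = if τ ∈ C then 1 else 0)
    (γ : ℝ) (hγ : 0 ≤ γ) (βe βd : ℝ) (hβe : 0 < βe) (hβd : 0 < βd)
    (pe pd : T → ℝ)
    (hpe : ∀ τ, pe τ = pb τ ^ (1 - γ) * Real.exp (r τ / βe) /
        (∑ τ', pb τ' ^ (1 - γ) * Real.exp (r τ' / βe)))
    (hpd : ∀ τ, pd τ =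
        pb τ ^ (1 - γ * (if τ ∈ C then (1 : ℝ) else 0)) * Real.exp (r τ / βd) /
        (∑ τ', pb τ' ^ (1 - γ * (if τ' ∈ C then (1 : ℝ) else 0)) *
          Real.exp (r τ' / βd)))
    (Cstar : ℝ) (h0 : 0 < Cstar) (h1 : Cstar < 1)
    (hce : ∑ τ ∈ C, pe τ = Cstar) (hcd : ∑ τ ∈ C, pd τ = Cstar) :
    ∑ τ, pd τ * Real.log (pd τ / pb τ) ≤ ∑ τ, pe τ * Real.log (pe τ / pb τ) :=
  stmt9_general pb hpos C hC r hr γ βe βd pe pd hpe hpd Cstar hce hcd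
end

section
/- Under the same setting (finite T, full-support π_base, C and its complement nonempty, binary reward r = 1_C, shared exponent γ̃ ≥ 0, inverse temperatures matched so that both policies achieve the same correctness C* ∈ (0,1)), the reverse chi-squared divergence satisfies χ²(π_base‖π_DS) ≤ χ²(π_base‖π_ent), where χ²(p‖q) = Σ_τ q(τ)·(p(τ)/q(τ) − 1)² = Σ_τ p(τ)²/q(τ) − 1. -/
/-!
On `C` both policies are proportional to `π_base ^ (1 - γ̃)` with the same mass `C*`, so they
coincide there. On the complement both carry mass `1 - C*`; there `π_DS` is proportional to
`π_base` itself, which makes `∑ π_base² / π_DS` equal to `(∑ π_base)² / (1 - C*)`, and by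
Sedrakyan's form of Cauchy–Schwarz this is the least value `∑ π_base² / q` can take over positive
`q` of mass `1 - C*`, in particular below the value at `q = π_ent`.
-/

open Finset Real

section

variable {ι : Type*}

theorem pos_of_eq_div_sum [Fintype ι] [Nonempty ι] {p f : ι → ℝ} (hf : ∀ i, 0 < f i)
    (hp : ∀ i, p i = f i / ∑ j, f j) (i : ι) : 0 < p i :=
  hp i ▸ div_pos (hf i) (sum_pos (fun j _ => hf j) univ_nonempty)

theorem sum_eq_one_of_eq_div_sum [Fintype ι] [Nonempty ι] {p f : ι → ℝ} (hf : ∀ i, 0 < f i)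
    (hp : ∀ i, p i = f i / ∑ j, f j) : ∑ i, p i = 1 := by
  rw [sum_congr rfl fun i _ => hp i, ← sum_div,
    div_self (sum_pos (fun j _ => hf j) univ_nonempty).ne']

theorem eq_of_eq_mul_const_of_sum_eq {s : Finset ι} {p p' w : ι → ℝ} {k k' : ℝ}
    (hw : ∀ i ∈ s, 0 < w i) (hp : ∀ i ∈ s, p i = w i * k) (hp' : ∀ i ∈ s, p' i = w i * k')
    (hsum : ∑ i ∈ s, p i = ∑ i ∈ s, p' i) : ∀ i ∈ s, p i = p' i := by
  intro i hi
  have hk : (∑ j ∈ s, w j) * k = (∑ j ∈ s, w j) * k' := by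
    rw [sum_mul, sum_mul, ← sum_congr rfl hp, ← sum_congr rfl hp', hsum]
  rw [hp i hi, hp' i hi, mul_left_cancel₀ (sum_pos hw ⟨i, hi⟩).ne' hk]

theorem sum_sq_div_eq_sq_sum_div_of_eq_mul_const {s : Finset ι} {p q : ι → ℝ} {k : ℝ}
    (hq : ∀ i ∈ s, 0 < q i) (hp : ∀ i ∈ s, p i = q i * k) :
    ∑ i ∈ s, q i ^ 2 / p i = (∑ i ∈ s, q i) ^ 2 / ∑ i ∈ s, p i := by
  rcases s.eq_empty_or_nonempty with rfl | hs
  · simp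
  calc ∑ i ∈ s, q i ^ 2 / p i = ∑ i ∈ s, q i / k :=
        sum_congr rfl fun i hi => by rw [hp i hi, sq, mul_div_mul_left _ _ (hq i hi).ne']
    _ = (∑ i ∈ s, q i) ^ 2 / ((∑ i ∈ s, q i) * k) := by
        rw [← sum_div, sq, mul_div_mul_left _ _ (sum_pos hq hs).ne']
    _ = (∑ i ∈ s, q i) ^ 2 / ∑ i ∈ s, p i := by rw [sum_congr rfl hp, sum_mul]

end

theorem stmt10_general {T : Type*} [Fintype T] [DecidableEq T] (pb : T → ℝ)
    (hpos : ∀ τ, 0 < pb τ)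
    (C : Finset T) (hC : C.Nonempty)
    (r : T → ℝ) (hr : ∀ τ, r τ = if τ ∈ C then 1 else 0)
    (γ : ℝ) (βe βd : ℝ)
    (pe pd : T → ℝ)
    (hpe : ∀ τ, pe τ = pb τ ^ (1 - γ) * Real.exp (r τ / βe) /
        (∑ τ', pb τ' ^ (1 - γ) * Real.exp (r τ' / βe)))
    (hpd : ∀ τ, pd τ =
        pb τ ^ (1 - γ * (if τ ∈ C then (1 : ℝ) else 0)) * Real.exp (r τ / βd) /
        (∑ τ', pb τ' ^ (1 - γ * (if τ' ∈ C then (1 : ℝ) else 0)) *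
          Real.exp (r τ' / βd)))
    (Cstar : ℝ)
    (hce : ∑ τ ∈ C, pe τ = Cstar) (hcd : ∑ τ ∈ C, pd τ = Cstar) :
    (∑ τ, pb τ ^ 2 / pd τ) - 1 ≤ (∑ τ, pb τ ^ 2 / pe τ) - 1 := by
  have : Nonempty T := ⟨hC.choose⟩
  have hfe : ∀ τ, 0 < pb τ ^ (1 - γ) * exp (r τ / βe) := fun τ => by
    have := hpos τ; positivity
  have hfd : ∀ τ, 0 < pb τ ^ (1 - γ * (if τ ∈ C then (1 : ℝ) else 0)) * exp (r τ / βd) :=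
    fun τ => by have := hpos τ; positivity
  have hmass_compl : ∑ τ ∈ Cᶜ, pd τ = ∑ τ ∈ Cᶜ, pe τ := by
    have he := sum_add_sum_compl C pe
    have hd := sum_add_sum_compl C pd
    rw [sum_eq_one_of_eq_div_sum hfe hpe, hce] at he
    rw [sum_eq_one_of_eq_div_sum hfd hpd, hcd] at hd
    linarith
  have heq_on_C : ∀ τ ∈ C, pd τ = pe τ :=
    eq_of_eq_mul_const_of_sum_eq (w := fun τ => pb τ ^ (1 - γ))
      (fun τ _ => rpow_pos_of_pos (hpos τ) _)
      (fun τ hτ => by rw [hpd, hr, if_pos hτ, mul_one, mul_div_assoc])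
      (fun τ hτ => by rw [hpe, hr, if_pos hτ, mul_div_assoc]) (hcd.trans hce.symm)
  have hle_on_compl : ∑ τ ∈ Cᶜ, pb τ ^ 2 / pd τ ≤ ∑ τ ∈ Cᶜ, pb τ ^ 2 / pe τ :=
    calc ∑ τ ∈ Cᶜ, pb τ ^ 2 / pd τ = (∑ τ ∈ Cᶜ, pb τ) ^ 2 / ∑ τ ∈ Cᶜ, pd τ :=
          sum_sq_div_eq_sq_sum_div_of_eq_mul_const (fun τ _ => hpos τ) fun τ hτ => by
            rw [hpd, hr, if_neg (mem_compl.1 hτ), mul_zero, sub_zero, rpow_one, mul_div_assoc]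
      _ = (∑ τ ∈ Cᶜ, pb τ) ^ 2 / ∑ τ ∈ Cᶜ, pe τ := by rw [hmass_compl]
      _ ≤ ∑ τ ∈ Cᶜ, pb τ ^ 2 / pe τ :=
          sq_sum_div_le_sum_sq_div _ _ fun τ _ => pos_of_eq_div_sum hfe hpe τ
  rw [← sum_add_sum_compl C fun τ => pb τ ^ 2 / pd τ,
    ← sum_add_sum_compl C fun τ => pb τ ^ 2 / pe τ,
    sum_congr rfl fun τ hτ => by rw [heq_on_C τ hτ]]
  linarith

/-- At matched correctness, reverse chi-squared: χ²(pb‖π_DS) ≤ χ²(pb‖π_ent). -/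
theorem stmt10 {T : Type*} [Fintype T] [DecidableEq T] (pb : T → ℝ)
    (hpos : ∀ τ, 0 < pb τ) (hsum : ∑ τ, pb τ = 1)
    (C : Finset T) (hC : C.Nonempty) (hCc : Cᶜ.Nonempty)
    (r : T → ℝ) (hr : ∀ τ, r τ = if τ ∈ C then 1 else 0)
    (γ : ℝ) (hγ : 0 ≤ γ) (βe βd : ℝ) (hβe : 0 < βe) (hβd : 0 < βd)
    (pe pd : T → ℝ)
    (hpe : ∀ τ, pe τ = pb τ ^ (1 - γ) * Real.exp (r τ / βe) /
        (∑ τ', pb τ' ^ (1 - γ) * Real.exp (r τ' / βe)))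
    (hpd : ∀ τ, pd τ =
        pb τ ^ (1 - γ * (if τ ∈ C then (1 : ℝ) else 0)) * Real.exp (r τ / βd) /
        (∑ τ', pb τ' ^ (1 - γ * (if τ' ∈ C then (1 : ℝ) else 0)) *
          Real.exp (r τ' / βd)))
    (Cstar : ℝ) (h0 : 0 < Cstar) (h1 : Cstar < 1)
    (hce : ∑ τ ∈ C, pe τ = Cstar) (hcd : ∑ τ ∈ C, pd τ = Cstar) :
    (∑ τ, pb τ ^ 2 / pd τ) - 1 ≤ (∑ τ, pb τ ^ 2 / pe τ) - 1 :=
  stmt10_general pb hpos C hC r hr γ βe βd pe pd hpe hpd Cstar hce hcd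
end

section
/- Under the same setting (finite T, full-support π_base, C and complement nonempty, binary reward r = 1_C, shared exponent γ̃ ≥ 0, inverse temperatures matched to equal correctness C* ∈ (0,1)), the forward chi-squared divergence satisfies χ²(π_DS‖π_base) ≤ χ²(π_ent‖π_base). -/
/-!
With `r = 1_C`, on `C` both tilted policies are proportional to `pb ^ (1 - γ)` and put mass
`C*` there, so they coincide on `C`. Off `C` the policy `π_DS` is proportional to `pb`, and among
all weights on `Cᶜ` of a given total mass the one proportional to `pb` minimizes `∑ q² / pb`:
the excess of `q` over it is `∑ (q - p)² / pb`.
-/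

open Finset Real

namespace Finset

variable {ι : Type*}

theorem eqOn_of_eq_mul_of_sum_eq (s : Finset ι) {g f h : ι → ℝ} {a b : ℝ}
    (hg : ∀ i ∈ s, 0 < g i) (hf : ∀ i ∈ s, f i = a * g i) (hh : ∀ i ∈ s, h i = b * g i)
    (hfh : ∑ i ∈ s, f i = ∑ i ∈ s, h i) : ∀ i ∈ s, f i = h i := by
  intro i hi
  have hab : a = b := by
    rw [sum_congr rfl hf, sum_congr rfl hh, ← mul_sum, ← mul_sum] at hfh
    exact mul_right_cancel₀ (sum_pos hg ⟨i, hi⟩).ne' hfh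
  rw [hf i hi, hh i hi, hab]

theorem sum_sq_div_le_of_eq_mul_of_sum_eq (s : Finset ι) {w p q : ι → ℝ} {k : ℝ}
    (hw : ∀ i ∈ s, 0 < w i) (hp : ∀ i ∈ s, p i = k * w i)
    (hpq : ∑ i ∈ s, p i = ∑ i ∈ s, q i) :
    ∑ i ∈ s, p i ^ 2 / w i ≤ ∑ i ∈ s, q i ^ 2 / w i := by
  have hexcess : ∑ i ∈ s, q i ^ 2 / w i - ∑ i ∈ s, p i ^ 2 / w i
      = ∑ i ∈ s, (q i - p i) ^ 2 / w i + 2 * k * ∑ i ∈ s, (q i - p i) := by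
    rw [← sum_sub_distrib, mul_sum, ← sum_add_distrib]
    refine sum_congr rfl fun i hi => ?_
    have hwi := (hw i hi).ne'
    rw [hp i hi]
    field_simp
    ring
  have hnonneg : 0 ≤ ∑ i ∈ s, (q i - p i) ^ 2 / w i :=
    sum_nonneg fun i hi => div_nonneg (sq_nonneg _) (hw i hi).le
  rw [sum_sub_distrib, ← hpq, sub_self, mul_zero, add_zero] at hexcess
  linarith

theorem sum_div_sum_eq_one [Fintype ι] [Nonempty ι] {w : ι → ℝ} (hw : ∀ i, 0 < w i) :
    ∑ i, w i / ∑ j, w j = 1 := by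
  rw [← sum_div, div_self (sum_pos (fun i _ => hw i) univ_nonempty).ne']

end Finset

theorem stmt11_general {T : Type*} [Fintype T] [DecidableEq T] (pb : T → ℝ)
    (hpos : ∀ τ, 0 < pb τ)
    (C : Finset T)
    (r : T → ℝ) (hr : ∀ τ, r τ = if τ ∈ C then 1 else 0)
    (γ : ℝ) (βe βd : ℝ)
    (pe pd : T → ℝ)
    (hpe : ∀ τ, pe τ = pb τ ^ (1 - γ) * Real.exp (r τ / βe) /
        (∑ τ', pb τ' ^ (1 - γ) * Real.exp (r τ' / βe)))
    (hpd : ∀ τ, pd τ =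
        pb τ ^ (1 - γ * (if τ ∈ C then (1 : ℝ) else 0)) * Real.exp (r τ / βd) /
        (∑ τ', pb τ' ^ (1 - γ * (if τ' ∈ C then (1 : ℝ) else 0)) *
          Real.exp (r τ' / βd)))
    (Cstar : ℝ)
    (hce : ∑ τ ∈ C, pe τ = Cstar) (hcd : ∑ τ ∈ C, pd τ = Cstar) :
    (∑ τ, pd τ ^ 2 / pb τ) - 1 ≤ (∑ τ, pe τ ^ 2 / pb τ) - 1 := by
  rcases isEmpty_or_nonempty T with hT | hT
  · simp
  set Ze := ∑ τ', pb τ' ^ (1 - γ) * exp (r τ' / βe)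
  set Zd := ∑ τ', pb τ' ^ (1 - γ * (if τ' ∈ C then (1 : ℝ) else 0)) * exp (r τ' / βd)
  have hagree : ∀ τ ∈ C, pd τ = pe τ := by
    refine eqOn_of_eq_mul_of_sum_eq C (a := exp (1 / βd) / Zd) (b := exp (1 / βe) / Ze)
      (fun τ _ => rpow_pos_of_pos (hpos τ) (1 - γ)) (fun τ hτ => ?_) (fun τ hτ => ?_)
      (hcd.trans hce.symm)
    · rw [hpd, hr, if_pos hτ, mul_one]; ring
    · rw [hpe, hr, if_pos hτ]; ring
  have hmass : ∑ τ, pd τ = ∑ τ, pe τ := by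
    rw [sum_congr rfl fun τ _ => hpd τ, sum_congr rfl fun τ _ => hpe τ,
      sum_div_sum_eq_one fun τ => mul_pos (rpow_pos_of_pos (hpos τ) _) (exp_pos _),
      sum_div_sum_eq_one fun τ => mul_pos (rpow_pos_of_pos (hpos τ) _) (exp_pos _)]
  have htail : ∑ τ ∈ Cᶜ, pd τ = ∑ τ ∈ Cᶜ, pe τ := by
    rw [← sum_add_sum_compl C pd, ← sum_add_sum_compl C pe, hcd, hce] at hmass
    linarith
  have hoff : ∑ τ ∈ Cᶜ, pd τ ^ 2 / pb τ ≤ ∑ τ ∈ Cᶜ, pe τ ^ 2 / pb τ := by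
    refine sum_sq_div_le_of_eq_mul_of_sum_eq Cᶜ (k := Zd⁻¹) (fun τ _ => hpos τ)
      (fun τ hτ => ?_) htail
    rw [hpd, hr, if_neg (mem_compl.mp hτ), mul_zero, sub_zero, rpow_one, zero_div, exp_zero,
      mul_one, div_eq_inv_mul]
  have hon : ∑ τ ∈ C, pd τ ^ 2 / pb τ = ∑ τ ∈ C, pe τ ^ 2 / pb τ :=
    sum_congr rfl fun τ hτ => by rw [hagree τ hτ]
  rw [← sum_add_sum_compl C fun τ => pd τ ^ 2 / pb τ,
    ← sum_add_sum_compl C fun τ => pe τ ^ 2 / pb τ, hon]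
  linarith

/-- At matched correctness, forward chi-squared: χ²(π_DS‖pb) ≤ χ²(π_ent‖pb). -/
theorem stmt11 {T : Type*} [Fintype T] [DecidableEq T] (pb : T → ℝ)
    (hpos : ∀ τ, 0 < pb τ) (hsum : ∑ τ, pb τ = 1)
    (C : Finset T) (hC : C.Nonempty) (hCc : Cᶜ.Nonempty)
    (r : T → ℝ) (hr : ∀ τ, r τ = if τ ∈ C then 1 else 0)
    (γ : ℝ) (hγ : 0 ≤ γ) (βe βd : ℝ) (hβe : 0 < βe) (hβd : 0 < βd)
    (pe pd : T → ℝ)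
    (hpe : ∀ τ, pe τ = pb τ ^ (1 - γ) * Real.exp (r τ / βe) /
        (∑ τ', pb τ' ^ (1 - γ) * Real.exp (r τ' / βe)))
    (hpd : ∀ τ, pd τ =
        pb τ ^ (1 - γ * (if τ ∈ C then (1 : ℝ) else 0)) * Real.exp (r τ / βd) /
        (∑ τ', pb τ' ^ (1 - γ * (if τ' ∈ C then (1 : ℝ) else 0)) *
          Real.exp (r τ' / βd)))
    (Cstar : ℝ) (h0 : 0 < Cstar) (h1 : Cstar < 1)
    (hce : ∑ τ ∈ C, pe τ = Cstar) (hcd : ∑ τ ∈ C, pd τ = Cstar) :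
    (∑ τ, pd τ ^ 2 / pb τ) - 1 ≤ (∑ τ, pe τ ^ 2 / pb τ) - 1 :=
  stmt11_general pb hpos C r hr γ βe βd pe pd hpe hpd Cstar hce hcd
end

section
/- (Entropy bonus flattens the correct-conditional distribution) Let π_base be full-support on finite T, ∅ ≠ C ⊆ T, r = 1_C, 0 ≤ γ̃ < 1, β > 0, and π_ent(τ) ∝ π_base(τ)^{1−γ̃}·exp(r(τ)/β). Then the normalized variance over correct trajectories decreases: σ(π_ent) ≤ σ(π_base), where σ(π) = [Σ_{τ∈C} π(τ)² − (Σ_{τ∈C} π(τ))²]/(Σ_{τ∈C} π(τ))², with equality iff π_base is constant on C or γ̃ = 0. -/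
/-!
On `C` the entropy-regularised policy is a constant multiple of `u = π_base ^ s` with
`s = 1 - γ̃`, and `σ` is scale invariant, so `σ(π_ent) = σ(u)`. Write `π_base = u * v` with
`v = π_base ^ (1 - s)`; `u` and `v` are similarly ordered, so two weighted Chebyshev
inequalities (weights `u`) give `(∑ u²) (∑ u v)² ≤ (∑ (u v)²) (∑ u)²`: multiplying by a
similarly ordered positive factor can only increase `∑ π² / (∑ π)²`. The second Chebyshev
inequality is strict as soon as `v` is non-constant on `C`, i.e. when `γ̃ > 0` and `π_base`
is non-constant on `C`.
-/

open Finset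

variable {ι R : Type*} [CommRing R] in
theorem Finset.two_mul_sum_mul_sum_sub_sum_mul_sum (s : Finset ι) (w f g : ι → R) :
    2 * ((∑ i ∈ s, w i) * (∑ i ∈ s, w i * f i * g i) -
        (∑ i ∈ s, w i * f i) * (∑ i ∈ s, w i * g i)) =
      ∑ i ∈ s, ∑ j ∈ s, w i * w j * ((f j - f i) * (g j - g i)) := by
  have h : ∀ i j, w i * w j * ((f j - f i) * (g j - g i)) =
      w i * (w j * f j * g j) + w j * (w i * f i * g i)
        - w i * f i * (w j * g j) - w j * f j * (w i * g i) := fun i j => by ring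
  simp only [h, sum_sub_distrib, sum_add_distrib, ← mul_sum, ← sum_mul]
  ring

section

variable {ι R : Type*} [CommRing R] [LinearOrder R] [IsStrictOrderedRing R]
  {s : Finset ι} {w f g : ι → R}

theorem MonovaryOn.weighted_sum_mul_sum_le_sum_mul_sum (hw : ∀ i ∈ s, 0 ≤ w i)
    (hfg : MonovaryOn f g s) :
    (∑ i ∈ s, w i * f i) * (∑ i ∈ s, w i * g i) ≤
      (∑ i ∈ s, w i) * (∑ i ∈ s, w i * f i * g i) := by
  have h := s.two_mul_sum_mul_sum_sub_sum_mul_sum w f g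
  have : 0 ≤ ∑ i ∈ s, ∑ j ∈ s, w i * w j * ((f j - f i) * (g j - g i)) :=
    sum_nonneg fun i hi => sum_nonneg fun j hj =>
      mul_nonneg (mul_nonneg (hw i hi) (hw j hj)) (hfg.sub_mul_sub_nonneg hi hj)
  linarith

theorem MonovaryOn.weighted_sum_mul_sum_lt_sum_mul_sum (hw : ∀ i ∈ s, 0 < w i)
    (hfg : MonovaryOn f g s) {i j : ι} (hi : i ∈ s) (hj : j ∈ s) (hf : f i < f j)
    (hg : g i < g j) :
    (∑ i ∈ s, w i * f i) * (∑ i ∈ s, w i * g i) <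
      (∑ i ∈ s, w i) * (∑ i ∈ s, w i * f i * g i) := by
  have h := s.two_mul_sum_mul_sum_sub_sum_mul_sum w f g
  have hterm : ∀ k ∈ s, ∀ l ∈ s, 0 ≤ w k * w l * ((f l - f k) * (g l - g k)) := fun k hk l hl =>
    mul_nonneg (mul_nonneg (hw k hk).le (hw l hl).le) (hfg.sub_mul_sub_nonneg hk hl)
  have : 0 < ∑ k ∈ s, ∑ l ∈ s, w k * w l * ((f l - f k) * (g l - g k)) :=
    sum_pos' (fun k hk => sum_nonneg (hterm k hk)) ⟨i, hi, sum_pos' (hterm i hi)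
      ⟨j, hj, mul_pos (mul_pos (hw i hi) (hw j hj)) (mul_pos (sub_pos.2 hf) (sub_pos.2 hg))⟩⟩
  linarith

theorem MonovaryOn.sum_sq_mul_sq_sum_mul_le {v : ι → R} (hw : ∀ i ∈ s, 0 ≤ w i)
    (hv : ∀ i ∈ s, 0 ≤ v i) (hvw : MonovaryOn v w s) :
    (∑ i ∈ s, w i ^ 2) * (∑ i ∈ s, w i * v i) ^ 2 ≤
      (∑ i ∈ s, (w i * v i) ^ 2) * (∑ i ∈ s, w i) ^ 2 := by
  have h₁ := hvw.weighted_sum_mul_sum_le_sum_mul_sum hw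
  have h₂ := (hvw.mul_right₀ hw hv (monovaryOn_self v s)).weighted_sum_mul_sum_le_sum_mul_sum hw
  simp only [Pi.mul_apply, ← sq, ← mul_assoc] at h₁ h₂
  have hP : 0 ≤ ∑ i ∈ s, w i := sum_nonneg hw
  have hQ : 0 ≤ ∑ i ∈ s, w i * v i := sum_nonneg fun i hi => mul_nonneg (hw i hi) (hv i hi)
  have hreorder : ∑ i ∈ s, w i * v i * w i = ∑ i ∈ s, w i ^ 2 * v i :=
    sum_congr rfl fun i _ => by ring
  rw [hreorder] at h₁
  linarith [mul_le_mul_of_nonneg_left h₁ hQ, mul_le_mul_of_nonneg_left h₂ hP]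

theorem MonovaryOn.sum_sq_mul_sq_sum_mul_lt {v : ι → R} (hw : ∀ i ∈ s, 0 < w i)
    (hv : ∀ i ∈ s, 0 ≤ v i) (hvw : MonovaryOn v w s) {i j : ι} (hi : i ∈ s) (hj : j ∈ s)
    (hij : v i < v j) :
    (∑ i ∈ s, w i ^ 2) * (∑ i ∈ s, w i * v i) ^ 2 <
      (∑ i ∈ s, (w i * v i) ^ 2) * (∑ i ∈ s, w i) ^ 2 := by
  have hw' : ∀ i ∈ s, 0 ≤ w i := fun i hi => (hw i hi).le
  have hwij : w i ≤ w j := not_lt.1 fun h => (hvw hj hi h).not_gt hij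
  have hwvij : w i * v i < w j * v j :=
    (mul_lt_mul_of_pos_left hij (hw i hi)).trans_le (mul_le_mul_of_nonneg_right hwij (hv j hj))
  have h₁ := hvw.weighted_sum_mul_sum_le_sum_mul_sum hw'
  have h₂ := (hvw.mul_right₀ hw' hv (monovaryOn_self v s)).weighted_sum_mul_sum_lt_sum_mul_sum
    hw hi hj hij hwvij
  simp only [Pi.mul_apply, ← sq, ← mul_assoc] at h₁ h₂
  have hP : 0 < ∑ i ∈ s, w i := sum_pos hw ⟨i, hi⟩
  have hQ : 0 ≤ ∑ i ∈ s, w i * v i := sum_nonneg fun i hi => mul_nonneg (hw' i hi) (hv i hi)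
  have hreorder : ∑ i ∈ s, w i * v i * w i = ∑ i ∈ s, w i ^ 2 * v i :=
    sum_congr rfl fun i _ => by ring
  rw [hreorder] at h₁
  linarith [mul_le_mul_of_nonneg_left h₁ hQ, mul_lt_mul_of_pos_left h₂ hP]

end

section NormalizedVariance

variable {T : Type*} {C : Finset T}

noncomputable def normalizedVariance (C : Finset T) (π : T → ℝ) : ℝ :=
  ((∑ τ ∈ C, π τ ^ 2) - (∑ τ ∈ C, π τ) ^ 2) / (∑ τ ∈ C, π τ) ^ 2

theorem normalizedVariance_congr {π π' : T → ℝ} (h : ∀ τ ∈ C, π τ = π' τ) :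
    normalizedVariance C π = normalizedVariance C π' := by
  unfold normalizedVariance
  rw [sum_congr rfl h, sum_congr rfl fun τ hτ => by rw [h τ hτ]]

theorem normalizedVariance_const_mul {K : ℝ} (hK : K ≠ 0) (π : T → ℝ) :
    normalizedVariance C (fun τ => K * π τ) = normalizedVariance C π := by
  simp only [normalizedVariance, mul_pow, ← mul_sum, ← mul_sub]
  exact mul_div_mul_left _ _ (pow_ne_zero 2 hK)

theorem normalizedVariance_eq_div_sub_one {π : T → ℝ} (h : ∑ τ ∈ C, π τ ≠ 0) :
    normalizedVariance C π = (∑ τ ∈ C, π τ ^ 2) / (∑ τ ∈ C, π τ) ^ 2 - 1 := by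
  rw [normalizedVariance, sub_div, div_self (pow_ne_zero 2 h)]

theorem normalizedVariance_le_mul_of_monovaryOn (hC : C.Nonempty) {w v : T → ℝ}
    (hw : ∀ τ ∈ C, 0 < w τ) (hv : ∀ τ ∈ C, 0 < v τ) (hvw : MonovaryOn v w C) :
    normalizedVariance C w ≤ normalizedVariance C (fun τ => w τ * v τ) := by
  have hP := sum_pos hw hC
  have hQ := sum_pos (fun τ hτ => mul_pos (hw τ hτ) (hv τ hτ)) hC
  rw [normalizedVariance_eq_div_sub_one hP.ne', normalizedVariance_eq_div_sub_one hQ.ne',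
    sub_le_sub_iff_right, div_le_div_iff₀ (by positivity) (by positivity)]
  exact hvw.sum_sq_mul_sq_sum_mul_le (fun τ hτ => (hw τ hτ).le) fun τ hτ => (hv τ hτ).le

theorem normalizedVariance_lt_mul_of_monovaryOn {w v : T → ℝ}
    (hw : ∀ τ ∈ C, 0 < w τ) (hv : ∀ τ ∈ C, 0 < v τ) (hvw : MonovaryOn v w C) {i j : T}
    (hi : i ∈ C) (hj : j ∈ C) (hij : v i < v j) :
    normalizedVariance C w < normalizedVariance C (fun τ => w τ * v τ) := by
  have hP := sum_pos hw ⟨i, hi⟩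
  have hQ := sum_pos (fun τ hτ => mul_pos (hw τ hτ) (hv τ hτ)) ⟨i, hi⟩
  rw [normalizedVariance_eq_div_sub_one hP.ne', normalizedVariance_eq_div_sub_one hQ.ne',
    sub_lt_sub_iff_right, div_lt_div_iff₀ (by positivity) (by positivity)]
  exact hvw.sum_sq_mul_sq_sum_mul_lt hw (fun τ hτ => (hv τ hτ).le) hi hj hij

theorem monovaryOn_rpow_rpow {x : T → ℝ} (hx : ∀ τ ∈ C, 0 ≤ x τ) {a b : ℝ} (ha : 0 ≤ a)
    (hb : 0 < b) : MonovaryOn (fun τ => x τ ^ a) (fun τ => x τ ^ b) C :=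
  fun _ hi _ hj h => Real.rpow_le_rpow (hx _ hi)
    ((Real.rpow_lt_rpow_iff (hx _ hi) (hx _ hj) hb).1 h).le ha

theorem normalizedVariance_rpow_mul_rpow_one_sub {x : T → ℝ} (hx : ∀ τ ∈ C, 0 < x τ) (s : ℝ) :
    normalizedVariance C (fun τ => x τ ^ s * x τ ^ (1 - s)) = normalizedVariance C x :=
  normalizedVariance_congr fun τ hτ => by rw [← Real.rpow_add (hx τ hτ), add_sub_cancel,
    Real.rpow_one]

theorem normalizedVariance_rpow_le (hC : C.Nonempty) {x : T → ℝ} (hx : ∀ τ ∈ C, 0 < x τ)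
    {s : ℝ} (hs0 : 0 < s) (hs1 : s ≤ 1) :
    normalizedVariance C (fun τ => x τ ^ s) ≤ normalizedVariance C x :=
  (normalizedVariance_le_mul_of_monovaryOn hC (fun τ hτ => Real.rpow_pos_of_pos (hx τ hτ) s)
    (fun τ hτ => Real.rpow_pos_of_pos (hx τ hτ) _)
    (monovaryOn_rpow_rpow (fun τ hτ => (hx τ hτ).le) (sub_nonneg.2 hs1) hs0)).trans_eq
    (normalizedVariance_rpow_mul_rpow_one_sub hx s)

theorem normalizedVariance_rpow_lt {x : T → ℝ} (hx : ∀ τ ∈ C, 0 < x τ) {s : ℝ} (hs0 : 0 < s)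
    (hs1 : s < 1) {i j : T} (hi : i ∈ C) (hj : j ∈ C) (hij : x i ≠ x j) :
    normalizedVariance C (fun τ => x τ ^ s) < normalizedVariance C x := by
  have hmono := monovaryOn_rpow_rpow (fun τ hτ => (hx τ hτ).le) (sub_nonneg.2 hs1.le) hs0
  have hlt {i j : T} (hi : i ∈ C) (hj : j ∈ C) (h : x i < x j) :
      x i ^ (1 - s) < x j ^ (1 - s) := Real.rpow_lt_rpow (hx i hi).le h (sub_pos.2 hs1)
  refine (?_ : _ < _).trans_eq (normalizedVariance_rpow_mul_rpow_one_sub hx s)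
  rcases hij.lt_or_gt with h | h
  · exact normalizedVariance_lt_mul_of_monovaryOn (fun τ hτ => Real.rpow_pos_of_pos (hx τ hτ) s)
      (fun τ hτ => Real.rpow_pos_of_pos (hx τ hτ) _) hmono hi hj (hlt hi hj h)
  · exact normalizedVariance_lt_mul_of_monovaryOn (fun τ hτ => Real.rpow_pos_of_pos (hx τ hτ) s)
      (fun τ hτ => Real.rpow_pos_of_pos (hx τ hτ) _) hmono hj hi (hlt hj hi h)

theorem normalizedVariance_rpow_of_forall_eq {x : T → ℝ} (hx : ∀ τ ∈ C, 0 < x τ)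
    (hconst : ∀ i ∈ C, ∀ j ∈ C, x i = x j) (s : ℝ) :
    normalizedVariance C (fun τ => x τ ^ s) = normalizedVariance C x := by
  rcases C.eq_empty_or_nonempty with rfl | ⟨i, hi⟩
  · simp [normalizedVariance]
  rw [← normalizedVariance_const_mul (Real.rpow_pos_of_pos (hx i hi) (s - 1)).ne' x]
  refine normalizedVariance_congr fun τ hτ => ?_
  rw [hconst τ hτ i hi, ← Real.rpow_add_one (hx i hi).ne', sub_add_cancel]

end NormalizedVariance

theorem stmt15_general {T : Type*} [Fintype T] [DecidableEq T] (pb : T → ℝ)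
    (hpos : ∀ τ, 0 < pb τ)
    (C : Finset T) (hC : C.Nonempty)
    (r : T → ℝ) (hr : ∀ τ, r τ = if τ ∈ C then 1 else 0)
    (γ β : ℝ) (hγ0 : 0 ≤ γ) (hγ1 : γ < 1)
    (Z : ℝ) (hZ : Z = ∑ τ, pb τ ^ (1 - γ) * Real.exp (r τ / β))
    (pe : T → ℝ)
    (hpe : ∀ τ, pe τ = pb τ ^ (1 - γ) * Real.exp (r τ / β) / Z) :
    ((∑ τ ∈ C, pe τ ^ 2) - (∑ τ ∈ C, pe τ) ^ 2) / (∑ τ ∈ C, pe τ) ^ 2 ≤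
      ((∑ τ ∈ C, pb τ ^ 2) - (∑ τ ∈ C, pb τ) ^ 2) / (∑ τ ∈ C, pb τ) ^ 2 ∧
    (((∑ τ ∈ C, pe τ ^ 2) - (∑ τ ∈ C, pe τ) ^ 2) / (∑ τ ∈ C, pe τ) ^ 2 =
      ((∑ τ ∈ C, pb τ ^ 2) - (∑ τ ∈ C, pb τ) ^ 2) / (∑ τ ∈ C, pb τ) ^ 2 ↔
      ((∀ τ₁ ∈ C, ∀ τ₂ ∈ C, pb τ₁ = pb τ₂) ∨ γ = 0)) := by
  have hZpos : 0 < Z := hZ ▸ sum_pos (fun τ _ => mul_pos (Real.rpow_pos_of_pos (hpos τ) _)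
    (Real.exp_pos _)) (hC.mono (subset_univ C))
  have hpeC : ∀ τ ∈ C, pe τ = Real.exp (1 / β) / Z * pb τ ^ (1 - γ) := fun τ hτ => by
    rw [hpe, hr, if_pos hτ]; ring
  have hσ : normalizedVariance C pe = normalizedVariance C (fun τ => pb τ ^ (1 - γ)) :=
    (normalizedVariance_congr hpeC).trans
      (normalizedVariance_const_mul (div_pos (Real.exp_pos _) hZpos).ne' _)
  change normalizedVariance C pe ≤ normalizedVariance C pb ∧
    (normalizedVariance C pe = normalizedVariance C pb ↔ _)
  have hposC : ∀ τ ∈ C, 0 < pb τ := fun τ _ => hpos τ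
  rw [hσ]
  refine ⟨normalizedVariance_rpow_le hC hposC (by linarith) (by linarith), fun heq => ?_, ?_⟩
  · by_contra! h
    obtain ⟨⟨τ₁, h₁, τ₂, h₂, hne⟩, hγ⟩ := h
    exact heq.not_lt (normalizedVariance_rpow_lt hposC (by linarith)
      (by linarith [hγ0.lt_of_ne' hγ]) h₁ h₂ hne)
  · rintro (hconst | rfl)
    · exact normalizedVariance_rpow_of_forall_eq hposC hconst _
    · simp only [sub_zero, Real.rpow_one]

/-- Entropy bonus flattens the correct-conditional distribution: the normalized
variance over correct trajectories of the entropy-modified policy is at most that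
of the base policy, with equality iff `pb` is constant on `C` or `γ = 0`. -/
theorem stmt15 {T : Type*} [Fintype T] [DecidableEq T] (pb : T → ℝ)
    (hpos : ∀ τ, 0 < pb τ) (hsum : ∑ τ, pb τ = 1)
    (C : Finset T) (hC : C.Nonempty)
    (r : T → ℝ) (hr : ∀ τ, r τ = if τ ∈ C then 1 else 0)
    (γ β : ℝ) (hγ0 : 0 ≤ γ) (hγ1 : γ < 1) (hβ : 0 < β)
    (Z : ℝ) (hZ : Z = ∑ τ, pb τ ^ (1 - γ) * Real.exp (r τ / β))
    (pe : T → ℝ)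
    (hpe : ∀ τ, pe τ = pb τ ^ (1 - γ) * Real.exp (r τ / β) / Z) :
    ((∑ τ ∈ C, pe τ ^ 2) - (∑ τ ∈ C, pe τ) ^ 2) / (∑ τ ∈ C, pe τ) ^ 2 ≤
      ((∑ τ ∈ C, pb τ ^ 2) - (∑ τ ∈ C, pb τ) ^ 2) / (∑ τ ∈ C, pb τ) ^ 2 ∧
    (((∑ τ ∈ C, pe τ ^ 2) - (∑ τ ∈ C, pe τ) ^ 2) / (∑ τ ∈ C, pe τ) ^ 2 =
      ((∑ τ ∈ C, pb τ ^ 2) - (∑ τ ∈ C, pb τ) ^ 2) / (∑ τ ∈ C, pb τ) ^ 2 ↔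
      ((∀ τ₁ ∈ C, ∀ τ₂ ∈ C, pb τ₁ = pb τ₂) ∨ γ = 0)) :=
  stmt15_general pb hpos C hC r hr γ β hγ0 hγ1 Z hZ pe hpe
end
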